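/- arXiv:1407.7944 — 3 statements merged into one kernel-verified Lean document; each statement's English description precedes it below -/
import Mathlib

section
/- Let n ≥ 1, and let A and B be diagonal n×n complex matrices with diagonal entries λ_1, …, λ_n and κ_1, …, κ_n respectively. Fix r ≥ 1, l : Fin n → ℕ with Σ_s l_s = r, and j ∈ Fin n, and define h : ℂ^n → ℂ^n by h(x) = (∏_s x_s^{l_s}) · e_j. Then for all x ∈ ℂ^n one has (D h(x))(A x) − B h(x) = (⟨l,λ⟩ − κ_j) h(x), where ⟨l,λ⟩ = Σ_s l_s λ_s; in particular, h is a nonzero eigenvector of the linear operator L* h := ⟨∂_x h, A x⟩ − B h acting on n-dimensional vector-valued homogeneous polynomials of degree r, with eigenvalue ⟨l,λ⟩ − κ_j. -/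
/-- Diagonal case of Bibikov's spectral lemma: for `A = diag λ`, `B = diag κ`,
the vector-valued monomial `h(x) = x^l e_j` of degree `r = |l|` satisfies
`(Dh(x))(Ax) − B h(x) = (⟨l,λ⟩ − κ_j) h(x)`, and `h` is a nonzero eigenvector of
the operator `L* h = ⟨∂_x h, Ax⟩ − Bh` with eigenvalue `⟨l,λ⟩ − κ_j`. -/
theorem stmt_3 {n : ℕ} (hn : 1 ≤ n) (lam kap : Fin n → ℂ)
    (A B : Matrix (Fin n) (Fin n) ℂ)
    (hA : A = Matrix.diagonal lam) (hB : B = Matrix.diagonal kap)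
    (r : ℕ) (hr : 1 ≤ r) (l : Fin n → ℕ) (hl : ∑ s, l s = r) (j : Fin n)
    (h : (Fin n → ℂ) → (Fin n → ℂ))
    (hh : ∀ x : Fin n → ℂ, h x = (∏ s, x s ^ l s) • (Pi.single j 1 : Fin n → ℂ)) :
    (∀ x : Fin n → ℂ,
      (fderiv ℂ h x) (A.mulVec x) - B.mulVec (h x)
        = ((∑ s, (l s : ℂ) * lam s) - kap j) • h x) ∧ h ≠ 0 := by
  constructor
  · intro x
    -- derivative of each factor
    have hfac : ∀ s : Fin n, HasFDerivAt (fun y : Fin n → ℂ => y s ^ l s)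
        (((l s : ℂ) * x s ^ (l s - 1)) • (ContinuousLinearMap.proj s : (Fin n → ℂ) →L[ℂ] ℂ)) x := by
      intro s
      have := (hasDerivAt_pow (l s) (x s)).comp_hasFDerivAt x
        ((ContinuousLinearMap.proj s : (Fin n → ℂ) →L[ℂ] ℂ).hasFDerivAt)
      exact this
    have hp : HasFDerivAt (fun y : Fin n → ℂ => ∏ s, y s ^ l s)
        (∑ s, (∏ t ∈ Finset.univ.erase s, x t ^ l t) •
          (((l s : ℂ) * x s ^ (l s - 1)) • (ContinuousLinearMap.proj s : (Fin n → ℂ) →L[ℂ] ℂ))) x :=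
      HasFDerivAt.finset_prod (fun s _ => hfac s)
    have hhd : HasFDerivAt h
        ((∑ s, (∏ t ∈ Finset.univ.erase s, x t ^ l t) •
          (((l s : ℂ) * x s ^ (l s - 1)) • (ContinuousLinearMap.proj s : (Fin n → ℂ) →L[ℂ] ℂ))).smulRight
          (Pi.single j 1 : Fin n → ℂ)) x := by
      have := hp.smul_const (Pi.single j 1 : Fin n → ℂ)
      exact this.congr_of_eventuallyEq (by filter_upwards with y using (hh y))
    rw [hhd.fderiv]
    have key : (∑ s, (∏ t ∈ Finset.univ.erase s, x t ^ l t) •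
          (((l s : ℂ) * x s ^ (l s - 1)) • (ContinuousLinearMap.proj s : (Fin n → ℂ) →L[ℂ] ℂ))) (A.mulVec x)
        = (∑ s, (l s : ℂ) * lam s) * ∏ s, x s ^ l s := by
      simp only [ContinuousLinearMap.coe_sum', Finset.sum_apply,
        ContinuousLinearMap.coe_smul', Pi.smul_apply, ContinuousLinearMap.proj_apply,
        smul_eq_mul, Finset.sum_mul]
      refine Finset.sum_congr rfl fun s _ => ?_
      rw [hA, Matrix.mulVec_diagonal]
      rcases Nat.eq_zero_or_pos (l s) with h0 | h0
      · simp [h0]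
      · have hx : x s ^ l s = x s ^ (l s - 1) * x s := by
          conv_lhs => rw [← Nat.succ_pred_eq_of_pos h0]
          rw [pow_succ, Nat.pred_eq_sub_one]
        rw [← Finset.mul_prod_erase Finset.univ (fun t => x t ^ l t) (Finset.mem_univ s), hx]
        ring
    rw [ContinuousLinearMap.smulRight_apply, key, hB]
    funext i
    simp only [Pi.sub_apply, Matrix.mulVec_diagonal, hh x, Pi.smul_apply, smul_eq_mul]
    rcases eq_or_ne i j with rfl | hij
    · simp only [Pi.single_eq_same]
      ring
    · simp [Pi.single_eq_of_ne hij]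
  · intro h0
    have := hh (fun _ => 1)
    rw [h0] at this
    have := congrFun this j
    simp at this
end

section
/- Let n ≥ 1, λ ∈ ℂ^n, and let A be the diagonal n×n complex matrix with diagonal entries λ_1, …, λ_n. Let c : ((Fin n → ℕ) × ℤ) → ℂ be finitely supported, and define H : ℂ^n × ℝ → ℂ by H(y,t) = Σ_{(l,k)} c(l,k) (∏_s y_s^{l_s}) e^{i k t}. If ∂_t H(y,t) + (D_y H(y,t))(A y) = 0 for all y ∈ ℂ^n and t ∈ ℝ, then c(l,k) = 0 for every (l,k) with i k + ⟨l,λ⟩ ≠ 0, where ⟨l,λ⟩ = Σ_s l_s λ_s. -/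
/-!
Each pseudomonomial `y^l e^{ikt}` is an eigenfunction of `L̃ = ∂_t + ⟨∂_y ·, diag(λ) y⟩` with
eigenvalue `ik + ⟨l,λ⟩` (Euler's identity for monomials, applied coordinatewise). Hence
`0 = L̃H = Σ c(l,k) (ik + ⟨l,λ⟩) y^l e^{ikt}`. Distinct pseudomonomials are distinct characters of
the monoid `(ℂ^n, ·) × (ℝ, +)`, so they are linearly independent by Dedekind's lemma, and every
product `c(l,k) (ik + ⟨l,λ⟩)` vanishes.
-/

open Complex Finset

section

variable {ι : Type*} [Fintype ι]

noncomputable def pseudomonomial (p : (ι → ℕ) × ℤ) (y : ι → ℂ) (t : ℝ) : ℂ :=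
  (∏ s, y s ^ p.1 s) * exp (I * p.2 * t)

noncomputable def pseudomonomialChar (p : (ι → ℕ) × ℤ) : (ι → ℂ) × Multiplicative ℝ →* ℂ where
  toFun m := pseudomonomial p m.1 m.2.toAdd
  map_one' := by simp [pseudomonomial]
  map_mul' a b := by
    simp only [pseudomonomial, Prod.fst_mul, Prod.snd_mul, Pi.mul_apply, mul_pow, prod_mul_distrib,
      toAdd_mul, ofReal_add, mul_add, exp_add]
    ring

theorem hasDerivAt_exp_I_mul_int (k : ℤ) (t : ℝ) :
    HasDerivAt (fun τ : ℝ => exp (I * k * τ)) (I * k * exp (I * k * t)) t := by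
  have h := ((hasDerivAt_id (t : ℂ)).const_mul (I * k)).cexp.comp_ofReal
  simpa [mul_comm] using h

theorem prod_update_one_pow {M : Type*} [CommMonoid M] [DecidableEq ι] (l : ι → ℕ) (s : ι)
    (a : M) : ∏ j, Function.update (1 : ι → M) s a j ^ l j = a ^ l s :=
  (prod_eq_single s (fun j _ hj => by simp [hj]) (by simp)).trans (by simp)

theorem pseudomonomial_injective : Function.Injective (pseudomonomial (ι := ι)) := by
  classical
  intro p q hpq
  have hl : p.1 = q.1 := by
    funext s
    have h := congrFun (congrFun hpq (Function.update 1 s 2)) 0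
    simp only [pseudomonomial, prod_update_one_pow, ofReal_zero, mul_zero, exp_zero, mul_one] at h
    exact Nat.pow_right_injective le_rfl (by exact_mod_cast h)
  have hk : p.2 = q.2 := by
    have h := hasDerivAt_exp_I_mul_int p.2 0
    have hexp : (fun τ : ℝ => exp (I * p.2 * τ)) = fun τ : ℝ => exp (I * q.2 * τ) := by
      funext τ
      simpa [pseudomonomial] using congrFun (congrFun hpq 1) τ
    rw [hexp] at h
    have := h.unique (hasDerivAt_exp_I_mul_int q.2 0)
    simp only [ofReal_zero, mul_zero, exp_zero, mul_one, mul_right_inj' I_ne_zero] at this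
    exact_mod_cast this
  exact Prod.ext hl hk

theorem linearIndependent_pseudomonomialChar :
    LinearIndependent ℂ fun p : (ι → ℕ) × ℤ => ⇑(pseudomonomialChar p) :=
  (linearIndependent_monoidHom _ ℂ).comp _ fun _ _ hpq =>
    pseudomonomial_injective <| funext₂ fun y t =>
      congrFun (congrArg DFunLike.coe hpq) (y, Multiplicative.ofAdd t)

/-- The operator `L̃ = ∂_t + ⟨∂_y ·, Ay⟩` of the paper. -/
noncomputable def flowDeriv (A : Matrix ι ι ℂ) (F : (ι → ℂ) → ℝ → ℂ) (y : ι → ℂ) (t : ℝ) : ℂ :=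
  deriv (fun τ => F y τ) t + fderiv ℂ (fun z => F z t) y (A.mulVec y)

theorem flowDeriv_finsetSum {α : Type*} (A : Matrix ι ι ℂ) (u : Finset α) (a : α → ℂ)
    (F : α → (ι → ℂ) → ℝ → ℂ) (y : ι → ℂ) (t : ℝ)
    (hF_time : ∀ i ∈ u, DifferentiableAt ℝ (fun τ => F i y τ) t)
    (hF_space : ∀ i ∈ u, DifferentiableAt ℂ (fun z => F i z t) y) :
    flowDeriv A (fun y t => ∑ i ∈ u, a i * F i y t) y t = ∑ i ∈ u, a i * flowDeriv A (F i) y t := by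
  unfold flowDeriv
  rw [deriv_fun_sum fun i hi => (hF_time i hi).const_mul (a i),
    fderiv_fun_sum fun i hi => (hF_space i hi).const_mul (a i), _root_.sum_apply, ← sum_add_distrib]
  refine sum_congr rfl fun i hi => ?_
  rw [deriv_const_mul _ (hF_time i hi), fderiv_const_mul (hF_space i hi), smul_apply,
    smul_eq_mul, mul_add]

theorem differentiable_monomial (l : ι → ℕ) : Differentiable ℂ fun z : ι → ℂ => ∏ s, z s ^ l s := by
  fun_prop

theorem fderiv_monomial_diagonal_mulVec [DecidableEq ι] (l : ι → ℕ) (lam y : ι → ℂ) :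
    fderiv ℂ (fun z : ι → ℂ => ∏ s, z s ^ l s) y ((Matrix.diagonal lam).mulVec y)
      = (∑ s, l s * lam s) * ∏ s, y s ^ l s := by
  have h := HasFDerivAt.finsetProd (u := univ) (g := fun s (z : ι → ℂ) => z s ^ l s) fun s _ =>
    (hasDerivAt_pow (l s) (y s)).comp_hasFDerivAt y
      (hasFDerivAt_apply (𝕜 := ℂ) (F' := fun _ => ℂ) s y)
  rw [h.fderiv, _root_.sum_apply, sum_mul]
  refine sum_congr rfl fun s _ => ?_
  rw [smul_apply, smul_apply, ContinuousLinearMap.proj_apply, smul_eq_mul, smul_eq_mul,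
    Matrix.mulVec_diagonal, ← prod_erase_mul _ _ (mem_univ s)]
  obtain hs | hs := eq_or_ne (l s) 0
  · simp [hs]
  · rw [← mul_pow_sub_one hs (y s)]
    ring

theorem hasDerivAt_pseudomonomial (p : (ι → ℕ) × ℤ) (y : ι → ℂ) (t : ℝ) :
    HasDerivAt (fun τ => pseudomonomial p y τ) (I * p.2 * pseudomonomial p y t) t :=
  ((hasDerivAt_exp_I_mul_int p.2 t).const_mul _).congr_deriv (by unfold pseudomonomial; ring)

theorem flowDeriv_pseudomonomial [DecidableEq ι] (lam : ι → ℂ) (p : (ι → ℕ) × ℤ) (y : ι → ℂ)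
    (t : ℝ) :
    flowDeriv (Matrix.diagonal lam) (pseudomonomial p) y t
      = (I * p.2 + ∑ s, p.1 s * lam s) * pseudomonomial p y t := by
  unfold flowDeriv
  rw [(hasDerivAt_pseudomonomial p y t).deriv]
  unfold pseudomonomial
  rw [fderiv_mul_const (differentiable_monomial _ _), smul_apply, smul_eq_mul,
    fderiv_monomial_diagonal_mulVec]
  ring

end

theorem stmt_6_general {n : ℕ} (lam : Fin n → ℂ)
    (A : Matrix (Fin n) (Fin n) ℂ) (hA : A = Matrix.diagonal lam)
    (c : ((Fin n → ℕ) × ℤ) →₀ ℂ)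
    (H : (Fin n → ℂ) → ℝ → ℂ)
    (hH : ∀ (y : Fin n → ℂ) (t : ℝ),
      H y t = c.sum fun p a =>
        a * (∏ s, y s ^ p.1 s) * Complex.exp (Complex.I * (p.2 : ℂ) * (t : ℂ)))
    (hPDE : ∀ (y : Fin n → ℂ) (t : ℝ),
      deriv (fun τ : ℝ => H y τ) t
        + (fderiv ℂ (fun z => H z t) y) (A.mulVec y) = 0) :
    ∀ (l : Fin n → ℕ) (k : ℤ),
      Complex.I * (k : ℂ) + ∑ s, (l s : ℂ) * lam s ≠ 0 → c (l, k) = 0 := by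
  subst hA
  have hH' : H = fun y t => ∑ p ∈ c.support, c p * pseudomonomial p y t := by
    funext y t
    simp only [hH, Finsupp.sum, pseudomonomial, mul_assoc]
  have hresonant : ∑ p ∈ c.support,
      (c p * (I * p.2 + ∑ s, p.1 s * lam s)) • ⇑(pseudomonomialChar p) = 0 := by
    funext m
    have h := hPDE m.1 m.2.toAdd
    rw [← flowDeriv, hH', flowDeriv_finsetSum] at h
    · simpa [flowDeriv_pseudomonomial, pseudomonomialChar, mul_assoc] using h
    · exact fun p _ => (hasDerivAt_pseudomonomial p _ _).differentiableAt
    · exact fun p _ => (differentiable_monomial _ _).mul_const _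
  intro l k hlk
  by_cases hmem : (l, k) ∈ c.support
  · have h := linearIndependent_iff'.1 linearIndependent_pseudomonomialChar _ _ hresonant _ hmem
    exact (mul_eq_zero.1 h).resolve_right hlk
  · exact Finsupp.notMem_support_iff.1 hmem

/-- Base case of Lemma 2.3(b): a finite sum of pseudomonomials
`H(y,t) = Σ c(l,k) y^l e^{ikt}` annihilated by the operator
`L̃ = ∂_t + ⟨∂_y ·, Ay⟩` (with `A = diag λ`) is resonant: every coefficient
`c(l,k)` with `ik + ⟨l,λ⟩ ≠ 0` vanishes. -/
theorem stmt_6 {n : ℕ} (hn : 1 ≤ n) (lam : Fin n → ℂ)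
    (A : Matrix (Fin n) (Fin n) ℂ) (hA : A = Matrix.diagonal lam)
    (c : ((Fin n → ℕ) × ℤ) →₀ ℂ)
    (H : (Fin n → ℂ) → ℝ → ℂ)
    (hH : ∀ (y : Fin n → ℂ) (t : ℝ),
      H y t = c.sum fun p a =>
        a * (∏ s, y s ^ p.1 s) * Complex.exp (Complex.I * (p.2 : ℂ) * (t : ℂ)))
    (hPDE : ∀ (y : Fin n → ℂ) (t : ℝ),
      deriv (fun τ : ℝ => H y τ) t
        + (fderiv ℂ (fun z => H z t) y) (A.mulVec y) = 0) :
    ∀ (l : Fin n → ℕ) (k : ℤ),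
      Complex.I * (k : ℂ) + ∑ s, (l s : ℂ) * lam s ≠ 0 → c (l, k) = 0 :=
  stmt_6_general lam A hA c H hH hPDE
end

section
/- Let m ≥ 2, let λ ∈ ℂ^m, let N be an m×m matrix with integer entries, and let p ∈ ℤ^m. Assume that for every j one has i p_j + Σ_{k=1}^{m} N_{j,k} λ_k = 0, and that the m×m matrix whose columns are p, N_{·,1}, …, N_{·,m−1} (the first m−1 columns of N preceded by p) has nonzero determinant. Then λ_m ≠ 0, and there exist rational numbers q_1, …, q_m such that λ_k = q_k · i for every k. -/
/-!
Writing `x = (i, λ₁, …, λₘ₋₁)`, the relations say `Q x = -λₘ • N_{·,m}`. As `Q` is an invertible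
integer matrix, `x = -λₘ • y` for a rational vector `y`. The first coordinate reads `i = -λₘ y₁`,
which forces `λₘ ≠ 0` and `y₁ ≠ 0`; then `λₘ = -(1/y₁) i` and `λₖ = (yₖ₊₁/y₁) i` for `k < m`.
-/

open Matrix

theorem Matrix.isUnit_map_intCast {n K : Type*} [Fintype n] [DecidableEq n] [Field K]
    [CharZero K] {A : Matrix n n ℤ} (hA : A.det ≠ 0) : IsUnit (A.map (Int.cast : ℤ → K)) := by
  rw [isUnit_iff_isUnit_det, ← Int.cast_det, isUnit_iff_ne_zero]
  exact_mod_cast hA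

theorem Matrix.exists_rat_eq_smul_of_mulVec_eq_smul {n K : Type*} [Fintype n] [DecidableEq n]
    [Field K] [CharZero K] {A : Matrix n n ℤ} (hA : A.det ≠ 0) {b : n → ℤ} {x : n → K} {c : K}
    (hx : A.map (Int.cast : ℤ → K) *ᵥ x = c • fun i => (b i : K)) :
    ∃ y : n → ℚ, x = c • fun i => (y i : K) := by
  set Aℚ : Matrix n n ℚ := A.map Int.cast
  set y : n → ℚ := Aℚ⁻¹ *ᵥ fun i => (b i : ℚ)
  have hy : Aℚ *ᵥ y = fun i => (b i : ℚ) := by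
    rw [mulVec_mulVec, mul_nonsing_inv _ ((isUnit_map_intCast hA).map detMonoidHom), one_mulVec]
  have hyK : A.map (Int.cast : ℤ → K) *ᵥ (fun i => (y i : K)) = fun i => (b i : K) := by
    funext i
    have := (Rat.castHom K).map_mulVec Aℚ y i
    rw [hy] at this
    simpa [Aℚ, Function.comp_def] using this.symm
  refine ⟨y, mulVec_injective_iff_isUnit.2 (isUnit_map_intCast hA) ?_⟩
  rw [hx, mulVec_smul, hyK]

theorem mulVec_cons_init_eq_smul_col {n : ℕ} (lam : Fin (n + 1) → ℂ)
    (N : Matrix (Fin (n + 1)) (Fin (n + 1)) ℤ) (p : Fin (n + 1) → ℤ)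
    (hres : ∀ j, Complex.I * (p j : ℂ) + ∑ k, (N j k : ℂ) * lam k = 0)
    (Q : Matrix (Fin (n + 1)) (Fin (n + 1)) ℤ) (hQ₀ : ∀ j, Q j 0 = p j)
    (hQsucc : ∀ j (k : Fin n), Q j k.succ = N j k.castSucc) :
    Q.map (Int.cast : ℤ → ℂ) *ᵥ Fin.cons Complex.I (Fin.init lam) =
      (-lam (Fin.last n)) • fun j => (N j (Fin.last n) : ℂ) := by
  funext j
  have hj := hres j
  rw [Fin.sum_univ_castSucc] at hj
  simp only [mulVec, dotProduct, Fin.sum_univ_succ, map_apply, Fin.cons_zero, Fin.cons_succ,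
    Fin.init, hQ₀, hQsucc, Pi.smul_apply, smul_eq_mul]
  linear_combination hj

/-- Case (2.11) in the proof of Lemma 2.4: if `i p_j + Σ_k N_{j,k} λ_k = 0` for
all `j`, and the matrix `Q` whose columns are `p, N_{·,1}, …, N_{·,m−1}` has
nonzero determinant, then `λ_m ≠ 0` and all `λ_k` are rational multiples of the
imaginary unit `i`. -/
theorem stmt_10 {m : ℕ} (hm : 2 ≤ m) (lam : Fin m → ℂ)
    (N : Matrix (Fin m) (Fin m) ℤ) (p : Fin m → ℤ)
    (hres : ∀ j : Fin m,
      Complex.I * (p j : ℂ) + ∑ k, (N j k : ℂ) * lam k = 0)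
    (Q : Matrix (Fin m) (Fin m) ℤ)
    (hQ : ∀ j k : Fin m, Q j k =
      if (k : ℕ) = 0 then p j
      else N j ⟨(k : ℕ) - 1, Nat.lt_of_le_of_lt (Nat.sub_le _ _) k.isLt⟩)
    (hdet : Q.det ≠ 0) :
    lam ⟨m - 1, by omega⟩ ≠ 0 ∧
      ∃ q : Fin m → ℚ, ∀ k : Fin m, lam k = (q k : ℂ) * Complex.I := by
  obtain ⟨n, rfl⟩ : ∃ n, m = n + 1 := ⟨m - 1, by omega⟩
  show lam (Fin.last n) ≠ 0 ∧ _
  have hsys := mulVec_cons_init_eq_smul_col lam N p hres Q (fun j => by simpa using hQ j 0)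
    (fun j k => by rw [hQ]; rfl)
  obtain ⟨y, hy⟩ := exists_rat_eq_smul_of_mulVec_eq_smul hdet hsys
  have hI : Complex.I = -lam (Fin.last n) * y 0 := by simpa using congrFun hy 0
  have hlam : ∀ k : Fin n, lam k.castSucc = -lam (Fin.last n) * y k.succ := by
    intro k; simpa [Fin.init] using congrFun hy k.succ
  have hlast : lam (Fin.last n) ≠ 0 := by rintro h; simp [h] at hI
  have hy₀ : (y 0 : ℂ) ≠ 0 := by rintro h; simp [h] at hI
  refine ⟨hlast, Fin.lastCases (-(y 0)⁻¹) fun k => y k.succ / y 0, Fin.lastCases ?_ fun k => ?_⟩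
  · simp only [Fin.lastCases_last, Rat.cast_neg, Rat.cast_inv]
    field_simp
    linear_combination hI
  · simp only [Fin.lastCases_castSucc, Rat.cast_div, hlam k]
    field_simp
    linear_combination -(y k.succ : ℂ) * hI
end
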